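/- Let f : ℕ → ℝ_{>0} satisfy f(n) → 0 and Σ f(n) = ∞. Then the filter dual to the summable ideal I = {A ⊆ ℕ : Σ_{n∈A} f(n) < ∞} is a P⁺-filter which is not rapid⁺. -/

import Mathlib

/-- The filter dual to the summable ideal of `f`, as a family of subsets of ℕ:
`A` belongs to it iff `f` is summable on the complement of `A`. -/
def summableFilter (f : ℕ → ℝ) : Set (Set ℕ) :=
  {A : Set ℕ | Summable fun n : ↑(Aᶜ) => f n}

/-- A set is `G`-stationary if its complement is not in `G`. -/
def GStat (G : Set (Set ℕ)) (A : Set ℕ) : Prop := Aᶜ ∉ G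

/-- `G` is a P⁺-filter. -/
def GPPlus (G : Set (Set ℕ)) : Prop :=
  ∀ A : ℕ → Set ℕ, (∀ k, GStat G (A k)) → Antitone A →
    ∃ B : Set ℕ, GStat G B ∧ ∀ k, (B \ A k).Finite

/-- `G` is rapid⁺. -/
def GRapidPlus (G : Set (Set ℕ)) : Prop :=
  ∀ I : Set ℕ, GStat G I → ∀ g : ℕ → ℕ, StrictMono g →
    ∃ B ⊆ I, GStat G B ∧ ∀ n, g n ≤ Nat.nth (· ∈ B) n

/-! For nonnegative `f`, a set is stationary iff its finite subsets carry unbounded `f`-mass.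
Given decreasing stationary sets `A k`, choose finite `F k ⊆ A k` of mass `> k`: their union is
stationary and lies in `A k` up to the finitely many elements of `F j`, `j < k`.
For rapidity, `f → 0` yields a strictly increasing `g` with `f n < 2⁻ᵏ` for `n ≥ g k`; a set whose
enumeration dominates `g` has `f`-mass bounded by a geometric series, so it is not stationary,
although `ℕ` is. -/

open Filter Set

theorem gStat_summableFilter_iff (f : ℕ → ℝ) (A : Set ℕ) :
    GStat (summableFilter f) A ↔ ¬ Summable (A.indicator f) := by
  rw [GStat, summableFilter, mem_ofPred_eq, compl_compl]
  exact not_congr summable_subtype_iff_indicator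

theorem not_summable_indicator_iff_forall_exists_finset {α : Type*} {f : α → ℝ}
    (hf : ∀ a, 0 ≤ f a) (A : Set α) :
    ¬ Summable (A.indicator f) ↔ ∀ c : ℝ, ∃ F : Finset α, ↑F ⊆ A ∧ c < ∑ i ∈ F, f i := by
  classical
  constructor
  · intro hA c
    by_contra! hle
    refine hA (summable_of_sum_le (c := c) (fun a => indicator_nonneg (fun a _ => hf a) a)
      fun u => ?_)
    rw [Finset.sum_indicator_eq_sum_filter]
    exact hle _ fun a ha => (Finset.mem_filter.mp ha).2
  · intro hunb hs
    obtain ⟨F, hFA, hF⟩ := hunb (∑' a, A.indicator f a)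
    refine hF.not_ge ?_
    calc ∑ i ∈ F, f i = ∑ i ∈ F, A.indicator f i :=
          Finset.sum_congr rfl fun i hi => (indicator_of_mem (hFA hi) f).symm
      _ ≤ ∑' a, A.indicator f a :=
          hs.sum_le_tsum F fun a _ => indicator_nonneg (fun a _ => hf a) a

theorem gPPlus_summableFilter {f : ℕ → ℝ} (hf : ∀ n, 0 ≤ f n) :
    GPPlus (summableFilter f) := by
  intro A hA hanti
  simp only [gStat_summableFilter_iff, not_summable_indicator_iff_forall_exists_finset hf] at hA
  choose F hFA hF using fun k : ℕ => hA k k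
  refine ⟨⋃ k, ↑(F k), ?_, fun k => ?_⟩
  · rw [gStat_summableFilter_iff, not_summable_indicator_iff_forall_exists_finset hf]
    intro c
    obtain ⟨k, hk⟩ := exists_nat_gt c
    exact ⟨F k, subset_iUnion (fun k => (F k : Set ℕ)) k, hk.trans (hF k)⟩
  · refine (finite_iUnion fun j : Fin k => (F j).finite_toSet).subset ?_
    rintro n ⟨hnB, hnA⟩
    obtain ⟨j, hj⟩ := mem_iUnion.mp hnB
    have hjk : j < k := lt_of_not_ge fun hkj => hnA (hanti hkj (hFA j hj))
    exact mem_iUnion.mpr ⟨⟨j, hjk⟩, hj⟩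

theorem summable_subtype_of_le_nth {f : ℕ → ℝ} (hf : ∀ n, 0 ≤ f n) {B : Set ℕ}
    {ε : ℕ → ℝ} (hε : Summable ε) (hB : ∀ n, f (Nat.nth (· ∈ B) n) ≤ ε n) :
    Summable fun n : B => f n := by
  rcases B.finite_or_infinite with hfin | hinf
  · have := hfin.to_subtype
    exact .of_finite
  · have := hinf.to_subtype
    rw [← (Nat.Subtype.orderIsoOfNat B).toEquiv.summable_iff]
    refine hε.of_nonneg_of_le (fun n => hf _) fun n => (le_of_eq ?_).trans (hB n)
    exact congrArg f (Nat.nth_apply_eq_orderIsoOfNat (p := (· ∈ B)) hinf n).symm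

theorem exists_strictMono_forall_ge_lt {f : ℕ → ℝ} (hlim : Tendsto f atTop (nhds 0))
    {ε : ℕ → ℝ} (hε : ∀ k, 0 < ε k) :
    ∃ g : ℕ → ℕ, StrictMono g ∧ ∀ k, ∀ n ≥ g k, f n < ε k :=
  extraction_forall_of_eventually fun k =>
    eventually_forall_ge_atTop.mpr (hlim.eventually (eventually_lt_nhds (hε k)))

theorem not_gRapidPlus_summableFilter {f : ℕ → ℝ} (hf : ∀ n, 0 ≤ f n)
    (hlim : Tendsto f atTop (nhds 0)) (hdiv : ¬ Summable f) :
    ¬ GRapidPlus (summableFilter f) := by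
  intro hrapid
  obtain ⟨g, hg, hfg⟩ := exists_strictMono_forall_ge_lt hlim
    (ε := fun k => (1 / 2 : ℝ) ^ k) fun k => by positivity
  have huniv : GStat (summableFilter f) univ := by
    rwa [gStat_summableFilter_iff, indicator_univ]
  obtain ⟨B, -, hB, hBg⟩ := hrapid univ huniv g hg
  refine (gStat_summableFilter_iff f B).mp hB (summable_subtype_iff_indicator.mp ?_)
  exact summable_subtype_of_le_nth hf (summable_geometric_of_lt_one (by norm_num) (by norm_num))
    fun n => (hfg n _ (hBg n)).le

theorem stmt_4 (f : ℕ → ℝ) (hpos : ∀ n, 0 < f n)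
    (hlim : Filter.Tendsto f Filter.atTop (nhds 0))
    (hdiv : ¬ Summable f) :
    GPPlus (summableFilter f) ∧ ¬ GRapidPlus (summableFilter f) :=
  ⟨gPPlus_summableFilter fun n => (hpos n).le,
    not_gRapidPlus_summableFilter (fun n => (hpos n).le) hlim hdiv⟩
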